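/- arXiv:1508.01995 — 5 statements merged into one kernel-verified Lean document; each statement's English description precedes it below -/
import Mathlib

section
/- Let n ≥ 2 and let V be a complex vector space of dimension n+1. For every 3-dimensional subspace U ⊆ Λ^{n−1}V, the annihilator a_U = {v ∈ V : v ∧ u = 0 in ΛⁿV for all u ∈ U} is a linear subspace of V of dimension at most n−2. -/
/-- The image of `Λᵏ V` in the exterior algebra of `V`: the span of `k`-fold products
`v₁ ∧ ⋯ ∧ v_k` of vectors of `V`. -/
noncomputable def wedgePow {V : Type*} [AddCommGroup V] [Module ℂ V] (k : ℕ) :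
    Submodule ℂ (ExteriorAlgebra ℂ V) :=
  Submodule.span ℂ
    {z | ∃ f : Fin k → V, z = (List.ofFn fun i => ExteriorAlgebra.ι ℂ (f i)).prod}

/-- The annihilator `a_U = {v ∈ V ∣ v ∧ u = 0 for all u ∈ U}` of a subspace `U` of the
exterior algebra, as a linear subspace of `V`. -/
def annih {V : Type*} [AddCommGroup V] [Module ℂ V]
    (U : Submodule ℂ (ExteriorAlgebra ℂ V)) : Submodule ℂ V where
  carrier := {v | ∀ u ∈ U, ExteriorAlgebra.ι ℂ v * u = 0}
  add_mem' := by
    intro a b ha hb u hu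
    rw [map_add, add_mul, ha u hu, hb u hu, add_zero]
  zero_mem' := by
    intro u hu
    rw [map_zero, zero_mul]
  smul_mem' := by
    intro c v hv u hu
    rw [map_smul, smul_mul_assoc, hv u hu, smul_zero]

/-! Suppose `a_U` contained `k = n - 1` linearly independent vectors `w₁, …, w_k`, and extend
them to a basis `(e_j)` of `V`. In the induced basis `e_T` of the exterior algebra,
`e_i ∧ e_T = ±e_{T ∪ {i}}` for `i ∉ T`, so `e_i ∧ u = 0` forces the coordinates of `u` at all `T`
missing `i` to vanish. For `u ∈ ΛᵏV` this leaves only the coordinate at `T = {1, …, k}`, so `U`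
lies in the line spanned by `w₁ ∧ ⋯ ∧ w_k`, contradicting `dim U = 3`. -/

namespace ExteriorAlgebra

open Set.powersetCard

variable {R M I : Type*} [CommRing R] [AddCommGroup M] [Module R M] [LinearOrder I]
  (b : Module.Basis I R M)

lemma basis_singleton (i : I) : b.ExteriorAlgebra {i} = ι R (b i) := by
  rw [basis_apply_ofCard b (Finset.card_singleton i)]
  simp [ιMulti_apply, ofFinEmbEquiv_symm_apply]

lemma ι_mul_basis_of_mem {i : I} {T : Finset I} (h : i ∈ T) :
    ι R (b i) * b.ExteriorAlgebra T = 0 := by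
  rw [← basis_singleton]
  exact basis_mul_of_not_disjoint b (ofCard (Finset.card_singleton i)) (ofCard rfl)
    (by simpa [ofCard] using h)

lemma ι_mul_basis_of_notMem {i : I} {T : Finset I} (h : i ∉ T) :
    ∃ ε : ℤˣ, ι R (b i) * b.ExteriorAlgebra T = ε • b.ExteriorAlgebra (insert i T) := by
  have hd : Disjoint (ofCard (Finset.card_singleton i)).val (ofCard (rfl : T.card = _)).val := by
    simpa [ofCard] using h
  have hunion : (disjUnion hd : Finset I) = insert i T := by
    simp [ofCard]
  refine ⟨(permOfDisjoint hd).sign, ?_⟩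
  rw [← basis_singleton, ← hunion, ← basis_mul_of_disjoint]
  rfl

lemma exists_basis_repr_ι_mul_insert {i : I} {T : Finset I} (h : i ∉ T) :
    ∃ ε : ℤˣ, ∀ u : ExteriorAlgebra R M,
      b.ExteriorAlgebra.repr (ι R (b i) * u) (insert i T) = ε • b.ExteriorAlgebra.repr u T := by
  obtain ⟨ε, hε⟩ := ι_mul_basis_of_notMem b h
  refine ⟨ε, fun u => LinearMap.congr_fun (b.ExteriorAlgebra.ext (f₁ :=
    b.ExteriorAlgebra.coord (insert i T) ∘ₗ LinearMap.mulLeft R (ι R (b i)))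
    (f₂ := ε • b.ExteriorAlgebra.coord T) fun T' => ?_) u⟩
  simp only [LinearMap.comp_apply, LinearMap.mulLeft_apply, LinearMap.smul_apply,
    Module.Basis.coord_apply, Module.Basis.repr_self]
  by_cases hT' : T' = T
  · subst hT'
    simp [hε]
  by_cases hi : i ∈ T'
  · simp [ι_mul_basis_of_mem b hi, hT']
  · obtain ⟨ε', hε'⟩ := ι_mul_basis_of_notMem b hi
    have : insert i T' ≠ insert i T := fun h' => hT' <| by
      rw [← Finset.erase_insert hi, h', Finset.erase_insert h]
    simp [hε', this, hT']

lemma basis_repr_eq_zero_of_ι_mul_eq_zero {i : I} {u : ExteriorAlgebra R M}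
    (hu : ι R (b i) * u = 0) {T : Finset I} (hT : i ∉ T) : b.ExteriorAlgebra.repr u T = 0 := by
  obtain ⟨ε, hε⟩ := exists_basis_repr_ι_mul_insert b hT
  rw [← smul_eq_zero_iff_eq ε, ← hε, hu, map_zero, Finsupp.zero_apply]

lemma basis_repr_eq_zero_of_mem_exteriorPower {k : ℕ} {u : ExteriorAlgebra R M}
    (hu : u ∈ ⋀[R]^k M) {T : Finset I} (hT : T.card ≠ k) : b.ExteriorAlgebra.repr u T = 0 := by
  have : b.ExteriorAlgebra.coord T ∘ₗ (⋀[R]^k M).subtype = 0 :=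
    (b.exteriorPower (n := k)).ext fun s => by
      simp only [LinearMap.comp_apply, Submodule.subtype_apply, LinearMap.zero_apply,
        ← basis_eq_coe_basis]
      rw [Module.Basis.coord_apply, Module.Basis.repr_self, Finsupp.single_eq_of_ne]
      exact fun h => hT (h ▸ Set.powersetCard.card_eq s)
  simpa using LinearMap.congr_fun this ⟨u, hu⟩

lemma mem_span_basis_of_ι_mul_eq_zero {k : ℕ} {s : Finset I} (hs : s.card = k)
    {u : ExteriorAlgebra R M} (hu : u ∈ ⋀[R]^k M) (h : ∀ i ∈ s, ι R (b i) * u = 0) :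
    u ∈ Submodule.span R {b.ExteriorAlgebra s} := by
  have hrepr : b.ExteriorAlgebra.repr u = Finsupp.single s (b.ExteriorAlgebra.repr u s) := by
    ext T
    by_cases hTs : T = s
    · simp [hTs]
    rw [Finsupp.single_eq_of_ne hTs]
    by_cases hT : T.card = k
    · obtain ⟨i, his, hiT⟩ := Finset.not_subset.mp fun hsT =>
        hTs (Finset.eq_of_subset_of_card_le hsT (by omega)).symm
      exact basis_repr_eq_zero_of_ι_mul_eq_zero b (h i his) hiT
    · exact basis_repr_eq_zero_of_mem_exteriorPower b hu hT
  rw [← b.ExteriorAlgebra.repr.symm_apply_apply u, hrepr, Module.Basis.repr_symm_single]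
  exact Submodule.smul_mem _ _ (Submodule.mem_span_singleton_self _)

end ExteriorAlgebra

lemma Module.Basis.sumExtend_apply_inl {K V ι : Type*} [DivisionRing K] [AddCommGroup V]
    [Module K V] {v : ι → V} (hv : LinearIndependent K v) (i : ι) :
    Module.Basis.sumExtend hv (Sum.inl i) = v i := by
  simp only [Module.Basis.sumExtend, Equiv.trans_def, Module.Basis.coe_reindex,
    Module.Basis.coe_extend, Function.comp_apply]
  rfl

lemma ExteriorAlgebra.mem_span_ιMulti_of_ι_mul_eq_zero {K V : Type*} [Field K]
    [AddCommGroup V] [Module K V] {k : ℕ} {w : Fin k → V} (hw : LinearIndependent K w)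
    {u : ExteriorAlgebra K V} (hu : u ∈ ⋀[K]^k V) (h : ∀ i, ι K (w i) * u = 0) :
    u ∈ Submodule.span K {ιMulti K k w} := by
  -- Any order on the added basis vectors works: in the lexicographic order on the sum,
  -- the `w i` come first and in their given order.
  let _ : LinearOrder (Module.Basis.sumExtendIndex hw) := WellOrderingRel.isWellOrder.linearOrder
  let b := (Module.Basis.sumExtend hw).reindex toLex
  let j : Fin k ↪o Fin k ⊕ₗ Module.Basis.sumExtendIndex hw :=
    OrderEmbedding.ofStrictMono _ Sum.Lex.inl_strictMono
  have hbj : ∀ i, b (j i) = w i := fun i => by simp [b, j, Module.Basis.sumExtend_apply_inl]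
  have hs : (Finset.univ.map j.toEmbedding).card = k := by simp
  have hω : b.ExteriorAlgebra (Finset.univ.map j.toEmbedding) = ιMulti K k w := by
    rw [basis_apply_ofCard b hs, ιMulti_family, Set.powersetCard.ofFinEmbEquiv_symm_apply]
    congr 1
    change ⇑b ∘ ⇑(Finset.orderEmbOfFin _ hs) = w
    rw [← Finset.orderEmbOfFin_unique' _ fun i => Finset.mem_map_of_mem _ (Finset.mem_univ i)]
    exact funext hbj
  rw [← hω]
  refine mem_span_basis_of_ι_mul_eq_zero b hs hu fun x hx => ?_
  obtain ⟨i, -, rfl⟩ := Finset.mem_map.mp hx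
  simpa [hbj] using h i

lemma wedgePow_eq_exteriorPower {V : Type*} [AddCommGroup V] [Module ℂ V] (k : ℕ) :
    wedgePow (V := V) k = ⋀[ℂ]^k V := by
  rw [wedgePow, ← ExteriorAlgebra.ιMulti_span_fixedDegree]
  congr 1
  ext z
  simp [ExteriorAlgebra.ιMulti_apply, eq_comm]

theorem stmt9_general {V : Type*} [AddCommGroup V] [Module ℂ V]
    (n : ℕ)
    (U : Submodule ℂ (ExteriorAlgebra ℂ V))
    (hU : U ≤ wedgePow (n - 1))
    (hdim : Module.finrank ℂ U = 3) :
    Module.finrank ℂ (annih U) ≤ n - 2 := by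
  by_contra! hlt
  obtain ⟨w, hw⟩ :=
    exists_linearIndependent_of_le_finrank (by omega : n - 1 ≤ Module.finrank ℂ (annih U))
  set ω := ExteriorAlgebra.ιMulti ℂ (n - 1) ((annih U).subtype ∘ w)
  have hUle : U ≤ Submodule.span ℂ {ω} := fun u hu =>
    ExteriorAlgebra.mem_span_ιMulti_of_ι_mul_eq_zero (hw.map' _ (annih U).ker_subtype)
      ((wedgePow_eq_exteriorPower _).le (hU hu)) fun i => (w i).2 u hu
  have := (Submodule.finrank_mono hUle).trans (finrank_span_le_card ({ω} : Set _))
  simp [hdim] at this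

/-- for `n ≥ 2`, `dim V = n+1` and a 3-dimensional subspace
`U ⊆ Λ^{n-1} V`, the annihilator `a_U = {v ∈ V ∣ v ∧ u = 0 in ΛⁿV for all u ∈ U}` is a
linear subspace of `V` of dimension at most `n - 2`. -/
theorem stmt9 {V : Type*} [AddCommGroup V] [Module ℂ V] [FiniteDimensional ℂ V]
    (n : ℕ) (hn : 2 ≤ n) (hdimV : Module.finrank ℂ V = n + 1)
    (U : Submodule ℂ (ExteriorAlgebra ℂ V))
    (hU : U ≤ wedgePow (n - 1))
    (hdim : Module.finrank ℂ U = 3) :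
    Module.finrank ℂ (annih U) ≤ n - 2 :=
  stmt9_general n U hU hdim
end

section
/- If (v, w) is a pair of symmetric 4×4 complex matrices satisfying the G(3,6) relations, then det v = det w. -/
/-- First element (in increasing order) of the complement of `{i, j}` in `{0, 1, 2, 3}`,
for `i < j` (junk value otherwise). -/
def cFst (i j : Fin 4) : Fin 4 :=
  if i = 0 ∧ j = 1 then 2
  else if i = 0 ∧ j = 2 then 1
  else if i = 0 ∧ j = 3 then 1
  else if i = 1 ∧ j = 2 then 0
  else if i = 1 ∧ j = 3 then 0
  else 0

/-- Second element (in increasing order) of the complement of `{i, j}` in `{0, 1, 2, 3}`,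
for `i < j` (junk value otherwise). -/
def cSnd (i j : Fin 4) : Fin 4 :=
  if i = 0 ∧ j = 1 then 3
  else if i = 0 ∧ j = 2 then 3
  else if i = 0 ∧ j = 3 then 2
  else if i = 1 ∧ j = 2 then 3
  else if i = 1 ∧ j = 3 then 2
  else 1

/-- Sign `ε(i,j)` of the permutation taking `(0,1,2,3)` to `(i, j, i', j')` where
`{i', j'}` is the complement of `{i, j}` listed in increasing order, for `i < j`. -/
def eps (i j : Fin 4) : ℂ :=
  if i = 0 ∧ j = 2 then -1 else if i = 1 ∧ j = 3 then -1 else 1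

/-- The `G(3,6)` relations for a pair of (symmetric) `4 × 4` complex matrices `(v, w)`:
(i) `v·w` is a scalar multiple of the identity; (ii) the `2 × 2` minors of `v` equal, up to
the signs `ε`, the complementary `2 × 2` minors of `w`. -/
def G36 (v w : Matrix (Fin 4) (Fin 4) ℂ) : Prop :=
  (∃ d : ℂ, v * w = d • (1 : Matrix (Fin 4) (Fin 4) ℂ)) ∧
  ∀ i j k l : Fin 4, i < j → k < l →
    v i k * v j l - v i l * v j k =
      eps i j * eps k l *
        (w (cFst i j) (cFst k l) * w (cSnd i j) (cSnd k l) -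
         w (cFst i j) (cSnd k l) * w (cSnd i j) (cFst k l))

lemma det_fin_four' (A : Matrix (Fin 4) (Fin 4) ℂ) :
    A.det =
      A 0 0 * (A 1 1 * (A 2 2 * A 3 3 - A 2 3 * A 3 2) - A 1 2 * (A 2 1 * A 3 3 - A 2 3 * A 3 1) + A 1 3 * (A 2 1 * A 3 2 - A 2 2 * A 3 1))
      - A 0 1 * (A 1 0 * (A 2 2 * A 3 3 - A 2 3 * A 3 2) - A 1 2 * (A 2 0 * A 3 3 - A 2 3 * A 3 0) + A 1 3 * (A 2 0 * A 3 2 - A 2 2 * A 3 0))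
      + A 0 2 * (A 1 0 * (A 2 1 * A 3 3 - A 2 3 * A 3 1) - A 1 1 * (A 2 0 * A 3 3 - A 2 3 * A 3 0) + A 1 3 * (A 2 0 * A 3 1 - A 2 1 * A 3 0))
      - A 0 3 * (A 1 0 * (A 2 1 * A 3 2 - A 2 2 * A 3 1) - A 1 1 * (A 2 0 * A 3 2 - A 2 2 * A 3 0) + A 1 2 * (A 2 0 * A 3 1 - A 2 1 * A 3 0)) := by
  rw [Matrix.det_succ_row_zero]
  simp (config := { decide := true }) [Fin.sum_univ_succ, Matrix.det_fin_three,
    Matrix.submatrix, Fin.succAbove, show (Fin.succ (2:Fin 3)) = (3:Fin 4) from rfl,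
    show (Fin.castSucc (2:Fin 3)) = (2:Fin 4) from rfl]
  ring

/-- fact (I.1): if `(v, w)` is a pair of symmetric `4 × 4` complex matrices
satisfying the `G(3,6)` relations, then `det v = det w`. -/
theorem stmt10 (v w : Matrix (Fin 4) (Fin 4) ℂ)
    (hv : v.IsSymm) (hw : w.IsSymm) (h : G36 v w) :
    v.det = w.det := by
  obtain ⟨-, h2⟩ := h
  have A01 := h2 0 1 0 1 (by decide) (by decide)
  have A02 := h2 0 1 0 2 (by decide) (by decide)
  have A03 := h2 0 1 0 3 (by decide) (by decide)
  have A12 := h2 0 1 1 2 (by decide) (by decide)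
  have A13 := h2 0 1 1 3 (by decide) (by decide)
  have A23 := h2 0 1 2 3 (by decide) (by decide)
  have B01 := h2 2 3 0 1 (by decide) (by decide)
  have B02 := h2 2 3 0 2 (by decide) (by decide)
  have B03 := h2 2 3 0 3 (by decide) (by decide)
  have B12 := h2 2 3 1 2 (by decide) (by decide)
  have B13 := h2 2 3 1 3 (by decide) (by decide)
  have B23 := h2 2 3 2 3 (by decide) (by decide)
  simp (config := { decide := true }) only [cFst, cSnd, eps, if_true, if_false]
    at A01 A02 A03 A12 A13 A23 B01 B02 B03 B12 B13 B23
  rw [det_fin_four', det_fin_four']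
  linear_combination
    (v 2 2 * v 3 3 - v 2 3 * v 3 2) * A01
    - (v 2 1 * v 3 3 - v 2 3 * v 3 1) * A02
    + (v 2 1 * v 3 2 - v 2 2 * v 3 1) * A03
    + (v 2 0 * v 3 3 - v 2 3 * v 3 0) * A12
    - (v 2 0 * v 3 2 - v 2 2 * v 3 0) * A13
    + (v 2 0 * v 3 1 - v 2 1 * v 3 0) * A23
    + (w 2 0 * w 3 1 - w 2 1 * w 3 0) * B01
    + (w 2 0 * w 3 2 - w 2 2 * w 3 0) * B02
    + (w 2 0 * w 3 3 - w 2 3 * w 3 0) * B03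
    + (w 2 1 * w 3 2 - w 2 2 * w 3 1) * B12
    + (w 2 1 * w 3 3 - w 2 3 * w 3 1) * B13
    + (w 2 2 * w 3 3 - w 2 3 * w 3 2) * B23
end

section
/- If (v, w) is a pair of symmetric 4×4 complex matrices satisfying the G(3,6) relations, then there exists d ∈ ℂ with v·w = d·id₄ and d² = det w; that is, v·w = ±√(det w)·id₄. -/
lemma detFour (M : Matrix (Fin 4) (Fin 4) ℂ) :
    M.det =
      M 0 0 * (M 1 1 * (M 2 2 * M 3 3 - M 2 3 * M 3 2) - M 1 2 * (M 2 1 * M 3 3 - M 2 3 * M 3 1)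
        + M 1 3 * (M 2 1 * M 3 2 - M 2 2 * M 3 1))
      - M 0 1 * (M 1 0 * (M 2 2 * M 3 3 - M 2 3 * M 3 2) - M 1 2 * (M 2 0 * M 3 3 - M 2 3 * M 3 0)
        + M 1 3 * (M 2 0 * M 3 2 - M 2 2 * M 3 0))
      + M 0 2 * (M 1 0 * (M 2 1 * M 3 3 - M 2 3 * M 3 1) - M 1 1 * (M 2 0 * M 3 3 - M 2 3 * M 3 0)
        + M 1 3 * (M 2 0 * M 3 1 - M 2 1 * M 3 0))
      - M 0 3 * (M 1 0 * (M 2 1 * M 3 2 - M 2 2 * M 3 1) - M 1 1 * (M 2 0 * M 3 2 - M 2 2 * M 3 0)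
        + M 1 2 * (M 2 0 * M 3 1 - M 2 1 * M 3 0)) := by
  rw [Matrix.det_succ_row_zero, Fin.sum_univ_four]
  simp only [Matrix.det_fin_three, Matrix.submatrix_apply]
  simp (config := { decide := true }) [Fin.succAbove, show Fin.succ (2:Fin 3) = 3 from rfl,
    show Fin.castSucc (2:Fin 3) = 2 from rfl]
  ring

/-- fact (I.2): if `(v, w)` is a pair of symmetric `4 × 4` complex matrices
satisfying the `G(3,6)` relations, then `v·w = d·id₄` for some `d` with `d² = det w`;
that is, `v·w = ±√(det w)·id₄`. -/
theorem stmt11 (v w : Matrix (Fin 4) (Fin 4) ℂ)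
    (hv : v.IsSymm) (hw : w.IsSymm) (h : G36 v w) :
    ∃ d : ℂ, v * w = d • (1 : Matrix (Fin 4) (Fin 4) ℂ) ∧ d ^ 2 = w.det := by
  obtain ⟨⟨d, hd⟩, hR⟩ := h
  refine ⟨d, hd, ?_⟩
  have e : ∀ i j, (v * w) i j = d * (1 : Matrix (Fin 4) (Fin 4) ℂ) i j := fun i j => by
    rw [hd]; simp
  have h00 := e 0 0
  have h11 := e 1 1
  have h01 := e 0 1
  simp [Matrix.mul_apply, Fin.sum_univ_four, Matrix.one_apply] at h00 h11 h01
  have R01 := hR 0 1 0 1 (by decide) (by decide)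
  have R02 := hR 0 1 0 2 (by decide) (by decide)
  have R03 := hR 0 1 0 3 (by decide) (by decide)
  have R12 := hR 0 1 1 2 (by decide) (by decide)
  have R13 := hR 0 1 1 3 (by decide) (by decide)
  have R23 := hR 0 1 2 3 (by decide) (by decide)
  simp [cFst, cSnd, eps] at R01 R02 R03 R12 R13 R23
  have hs : ∀ i j, w j i = w i j := fun i j => hw.apply i j
  rw [detFour]
  simp only [hs 0 1, hs 0 2, hs 0 3, hs 1 2, hs 1 3, hs 2 3] at *
  linear_combination
    (-(v 1 0 * w 0 1 + v 1 1 * w 1 1 + v 1 2 * w 1 2 + v 1 3 * w 1 3)) * h00 +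
    (-d) * h11 +
    (v 1 0 * w 0 0 + v 1 1 * w 0 1 + v 1 2 * w 0 2 + v 1 3 * w 0 3) * h01 +
    (w 0 0 * w 1 1 - w 0 1 * w 0 1) * R01 +
    (w 0 0 * w 1 2 - w 0 2 * w 0 1) * R02 +
    (w 0 0 * w 1 3 - w 0 3 * w 0 1) * R03 +
    (w 0 1 * w 1 2 - w 0 2 * w 1 1) * R12 +
    (w 0 1 * w 1 3 - w 0 3 * w 1 1) * R13 +
    (w 0 2 * w 1 3 - w 0 3 * w 1 2) * R23
end

section
/- If (v, w) is a pair of symmetric 4×4 complex matrices satisfying the G(3,6) relations, then rank w ≠ 3 and rank v ≠ 3. -/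
open Matrix

lemma eps_ne (i j : Fin 4) : eps i j ≠ 0 := by
  unfold eps; split_ifs <;> norm_num

lemma comp_facts : ∀ a b : Fin 4, a < b →
    cFst a b < cSnd a b ∧ cFst (cFst a b) (cSnd a b) = a ∧ cSnd (cFst a b) (cSnd a b) = b := by
  decide

lemma rank_submatrix_le' (A : Matrix (Fin 4) (Fin 4) ℂ) (r c : Fin 2 → Fin 4) :
    (A.submatrix r c).rank ≤ A.rank := by
  have h1 : A.submatrix id c
      = A * ((1 : Matrix (Fin 4) (Fin 4) ℂ).submatrix (Equiv.refl (Fin 4)) c) := by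
    rw [Matrix.mul_submatrix_one]
    rfl
  have h2 : A.submatrix r c
      = ((1 : Matrix (Fin 4) (Fin 4) ℂ).submatrix r (Equiv.refl (Fin 4))) * (A.submatrix id c) := by
    rw [Matrix.one_submatrix_mul]
    simp [Matrix.submatrix_submatrix]
  calc (A.submatrix r c).rank
      ≤ (A.submatrix id c).rank := by rw [h2]; exact Matrix.rank_mul_le_right _ _
    _ ≤ A.rank := by rw [h1]; exact Matrix.rank_mul_le_left _ _

lemma minors_zero_of_rank_le_one (A : Matrix (Fin 4) (Fin 4) ℂ) (hA : A.rank ≤ 1) :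
    ∀ i j k l : Fin 4, A i k * A j l - A i l * A j k = 0 := by
  intro i j k l
  by_contra hne
  have hdet : (A.submatrix ![i, j] ![k, l]).det = A i k * A j l - A i l * A j k := by
    rw [Matrix.det_fin_two]; simp
  have hu : IsUnit (A.submatrix ![i, j] ![k, l]) :=
    (Matrix.isUnit_iff_isUnit_det _).mpr (isUnit_iff_ne_zero.mpr (by rw [hdet]; exact hne))
  have h2 : (A.submatrix ![i, j] ![k, l]).rank = 2 := by
    rw [Matrix.rank_of_isUnit _ hu, Fintype.card_fin]
  have := rank_submatrix_le' A ![i, j] ![k, l]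
  omega

lemma rank_le_one_of_minors (A : Matrix (Fin 4) (Fin 4) ℂ)
    (h : ∀ i j k l : Fin 4, A i k * A j l - A i l * A j k = 0) : A.rank ≤ 1 := by
  by_cases hz : A = 0
  · rw [hz, Matrix.rank_zero]; omega
  · obtain ⟨a, b, hab⟩ : ∃ a b, A a b ≠ 0 := by
      by_contra hc; push_neg at hc; exact hz (by ext i j; simpa using hc i j)
    have hAe : A = Matrix.vecMulVec (fun i => A i b * (A a b)⁻¹) (fun j => A a j) := by
      ext i j
      rw [Matrix.vecMulVec_apply]
      field_simp
      linear_combination h i a j b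
    rw [hAe, Matrix.vecMulVec_eq (Fin 1)]
    calc (Matrix.replicateCol (Fin 1) (fun i => A i b * (A a b)⁻¹)
            * Matrix.replicateRow (Fin 1) (fun j => A a j)).rank
        ≤ (Matrix.replicateCol (Fin 1) (fun i => A i b * (A a b)⁻¹)).rank :=
          Matrix.rank_mul_le_left _ _
      _ ≤ Fintype.card (Fin 1) := Matrix.rank_le_card_width _
      _ = 1 := Fintype.card_fin 1

lemma minors_all (A : Matrix (Fin 4) (Fin 4) ℂ)
    (h : ∀ i j k l : Fin 4, i < j → k < l → A i k * A j l - A i l * A j k = 0) :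
    ∀ i j k l : Fin 4, A i k * A j l - A i l * A j k = 0 := by
  intro i j k l
  rcases lt_trichotomy i j with hij | rfl | hij
  · rcases lt_trichotomy k l with hkl | rfl | hkl
    · exact h i j k l hij hkl
    · ring
    · linear_combination - h i j l k hij hkl
  · ring
  · rcases lt_trichotomy k l with hkl | rfl | hkl
    · linear_combination - h j i k l hij hkl
    · ring
    · linear_combination h j i l k hij hkl

lemma rank_add_rank_le (v w : Matrix (Fin 4) (Fin 4) ℂ) (h : v * w = 0) :
    v.rank + w.rank ≤ 4 := by
  have hle : LinearMap.range w.mulVecLin ≤ LinearMap.ker v.mulVecLin := by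
    rintro x ⟨y, rfl⟩
    simp only [LinearMap.mem_ker, Matrix.mulVecLin_apply, Matrix.mulVec_mulVec, h,
      Matrix.zero_mulVec]
  have h1 := LinearMap.finrank_range_add_finrank_ker v.mulVecLin
  rw [Module.finrank_fintype_fun_eq_card, Fintype.card_fin] at h1
  have h2 : w.rank ≤ Module.finrank ℂ (LinearMap.ker v.mulVecLin) :=
    Submodule.finrank_mono hle
  have h3 : v.rank = Module.finrank ℂ (LinearMap.range v.mulVecLin) := rfl
  omega

/-- fact (I.3): if `(v, w)` is a pair of symmetric `4 × 4` complex matrices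
satisfying the `G(3,6)` relations, then `rank w ≠ 3` and `rank v ≠ 3`. -/
theorem stmt12 (v w : Matrix (Fin 4) (Fin 4) ℂ)
    (hv : v.IsSymm) (hw : w.IsSymm) (h : G36 v w) :
    w.rank ≠ 3 ∧ v.rank ≠ 3 := by
  obtain ⟨⟨d, hd⟩, hrel⟩ := h
  have hdet : v.det * w.det = d ^ 4 := by
    have := congrArg Matrix.det hd
    rwa [Matrix.det_mul, Matrix.det_smul, Matrix.det_one, Fintype.card_fin, mul_one] at this
  constructor
  · intro hr3
    have hdw : w.det = 0 := by
      by_contra hne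
      have : w.rank = 4 := by
        rw [Matrix.rank_of_isUnit w ((Matrix.isUnit_iff_isUnit_det w).mpr
          (isUnit_iff_ne_zero.mpr hne)), Fintype.card_fin]
      omega
    have hd0 : d = 0 := by
      have h4 : d ^ 4 = 0 := by rw [← hdet, hdw, mul_zero]
      exact pow_eq_zero_iff (by norm_num) |>.mp h4
    have hvw0 : v * w = 0 := by rw [hd, hd0, zero_smul]
    have hrv : v.rank ≤ 1 := by have := rank_add_rank_le v w hvw0; omega
    have hvm := minors_zero_of_rank_le_one v hrv
    have hwm : ∀ a b c d : Fin 4, a < b → c < d → w a c * w b d - w a d * w b c = 0 := by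
      intro a b c d hab hcd
      obtain ⟨h1, h2, h3⟩ := comp_facts a b hab
      obtain ⟨h4, h5, h6⟩ := comp_facts c d hcd
      have hr := hrel (cFst a b) (cSnd a b) (cFst c d) (cSnd c d) h1 h4
      rw [h2, h3, h5, h6, hvm] at hr
      exact ((mul_eq_zero.mp hr.symm).resolve_left
        (mul_ne_zero (eps_ne _ _) (eps_ne _ _)))
    have hrw : w.rank ≤ 1 := rank_le_one_of_minors w (minors_all w hwm)
    omega
  · intro hr3
    have hdv : v.det = 0 := by
      by_contra hne
      have : v.rank = 4 := by
        rw [Matrix.rank_of_isUnit v ((Matrix.isUnit_iff_isUnit_det v).mpr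
          (isUnit_iff_ne_zero.mpr hne)), Fintype.card_fin]
      omega
    have hd0 : d = 0 := by
      have h4 : d ^ 4 = 0 := by rw [← hdet, hdv, zero_mul]
      exact pow_eq_zero_iff (by norm_num) |>.mp h4
    have hvw0 : v * w = 0 := by rw [hd, hd0, zero_smul]
    have hrw : w.rank ≤ 1 := by have := rank_add_rank_le v w hvw0; omega
    have hwm := minors_zero_of_rank_le_one w hrw
    have hvmo : ∀ i j k l : Fin 4, i < j → k < l → v i k * v j l - v i l * v j k = 0 := by
      intro i j k l hij hkl
      have hr := hrel i j k l hij hkl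
      rw [hwm] at hr
      simpa using hr
    have hrv : v.rank ≤ 1 := rank_le_one_of_minors v (minors_all v hvmo)
    omega
end

section
/- Let a ∈ ℂ⁴ be a nonzero vector and let w be the symmetric 4×4 complex matrix with entries w_{kl} = a_k·a_l. Then a symmetric 4×4 complex matrix v is such that (v, w) satisfies the G(3,6) relations if and only if there exists x ∈ ℂ⁴ with a₁x₁ + a₂x₂ + a₃x₃ + a₄x₄ = 0 and v_{ij} = x_i·x_j for all i, j. -/
/-- let `a ∈ ℂ⁴` be a nonzero vector and let `w` be the symmetric matrix with
`w k l = a k * a l`. A symmetric `4 × 4` complex matrix `v` is such that `(v, w)` satisfies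
the `G(3,6)` relations iff there exists `x ∈ ℂ⁴` with `a·x = 0` and `v i j = x i * x j`
for all `i, j`. -/
theorem stmt17 (a : Fin 4 → ℂ) (ha : a ≠ 0) (w : Matrix (Fin 4) (Fin 4) ℂ)
    (hw : ∀ k l : Fin 4, w k l = a k * a l)
    (v : Matrix (Fin 4) (Fin 4) ℂ) (hv : v.IsSymm) :
    G36 v w ↔
      ∃ x : Fin 4 → ℂ, (∑ i : Fin 4, a i * x i) = 0 ∧ ∀ i j : Fin 4, v i j = x i * x j := by
  have hsym : ∀ i j : Fin 4, v i j = v j i := fun i j => hv.apply j i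
  constructor
  · rintro ⟨⟨d, hd⟩, hmin⟩
    -- all 2x2 minors of v vanish
    have hminor : ∀ i j k l : Fin 4, i < j → k < l → v i k * v j l = v i l * v j k := by
      intro i j k l hij hkl
      have h := hmin i j k l hij hkl
      rw [hw, hw, hw, hw] at h
      linear_combination h
    have hM : ∀ i j k l : Fin 4, v i k * v j l = v i l * v j k := by
      have key : ∀ i j k l : Fin 4, i < j → v i k * v j l = v i l * v j k := by
        intro i j k l hij
        rcases lt_trichotomy k l with hkl | rfl | hkl
        · exact hminor i j k l hij hkl
        · ring
        · linear_combination -hminor i j l k hij hkl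
      intro i j k l
      rcases lt_trichotomy i j with hij | rfl | hij
      · exact key i j k l hij
      · ring
      · linear_combination -key j i k l hij
    -- scalar multiple analysis
    have hE : ∀ i l : Fin 4, (∑ k, v i k * a k) * a l = d * (if i = l then 1 else 0) := by
      intro i l
      have h := congrFun (congrFun hd i) l
      rw [Matrix.mul_apply] at h
      simp only [Matrix.smul_apply, Matrix.one_apply, smul_eq_mul] at h
      rw [← h, Finset.sum_mul]
      refine Finset.sum_congr rfl fun k _ => ?_
      rw [hw]; ring
    have hd0 : d = 0 := by
      by_contra hd0
      have h01 := hE 0 1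
      have h11 := hE 1 1
      rw [if_neg (by decide), mul_zero] at h01
      rw [if_pos rfl, mul_one] at h11
      have ha1 : a 1 ≠ 0 := by
        intro h
        rw [h, mul_zero] at h11
        exact hd0 h11.symm
      have hs0 : (∑ k, v 0 k * a k) = 0 := by
        rcases mul_eq_zero.mp h01 with h | h
        · exact h
        · exact absurd h ha1
      have h00 := hE 0 0
      rw [if_pos rfl, hs0, zero_mul, mul_one] at h00
      exact hd0 h00.symm
    obtain ⟨l0, hl0⟩ : ∃ l, a l ≠ 0 := Function.ne_iff.mp ha
    have hs : ∀ i : Fin 4, (∑ k, v i k * a k) = 0 := by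
      intro i
      have h := hE i l0
      rw [hd0, zero_mul] at h
      rcases mul_eq_zero.mp h with h | h
      · exact h
      · exact absurd h hl0
    by_cases hv0 : v = 0
    · refine ⟨0, by simp, fun i j => by simp [hv0]⟩
    · obtain ⟨p, q, hpq⟩ : ∃ p q, v p q ≠ 0 := by
        by_contra h
        push_neg at h
        exact hv0 (Matrix.ext fun i j => h i j)
      have hvpp : v p p ≠ 0 := by
        have h : v p p * v q q = v p q * v q p := hM p q p q
        rw [← hsym p q] at h
        intro h0
        rw [h0, zero_mul] at h
        exact hpq (by
          have := h.symm
          rcases mul_eq_zero.mp this with h1 | h1 <;> exact h1)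
      obtain ⟨c, hc⟩ := IsAlgClosed.exists_pow_nat_eq (v p p) (n := 2) (by norm_num)
      have hc0 : c ≠ 0 := by
        intro h
        rw [h] at hc
        exact hvpp (by rw [← hc]; ring)
      refine ⟨fun i => v i p * c⁻¹, ?_, ?_⟩
      · have hsp := hs p
        have step : ∀ i : Fin 4, a i * (v i p * c⁻¹) = (v p i * a i) * c⁻¹ := by
          intro i; rw [hsym i p]; ring
        calc (∑ i, a i * (v i p * c⁻¹)) = (∑ i, v p i * a i) * c⁻¹ := by
              rw [Finset.sum_mul]; exact Finset.sum_congr rfl fun i _ => step i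
          _ = 0 := by rw [hsp, zero_mul]
      · intro i j
        have h : v i j * v p p = v i p * v p j := hM i p j p
        rw [← hsym j p] at h
        have hcc : c * c = v p p := by rw [← hc]; ring
        field_simp
        linear_combination h + v i j * hcc
  · rintro ⟨x, hx, hxv⟩
    constructor
    · refine ⟨0, ?_⟩
      ext i l
      rw [Matrix.mul_apply]
      simp only [Matrix.smul_apply, Matrix.one_apply, smul_eq_mul, zero_mul]
      rw [Fin.sum_univ_four]
      simp only [hxv, hw]
      have hx4 := hx
      rw [Fin.sum_univ_four] at hx4
      linear_combination (x i * a l) * hx4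
    · intro i j k l _ _
      rw [hw, hw, hw, hw, hxv, hxv, hxv, hxv]
      ring
end
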